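/- Let a, c > 0 and b ∈ ℝ, and set β := b/√(ac). For all n, m ∈ ℕ, the bivariate Hermite polynomial Ĥ_{n,m} satisfies the partial differential equation 𝔇 Ĥ_{n,m} = (m + n) · Ĥ_{n,m}, where 𝔇 = (x∂x − ∂x²) + (y∂y − ∂y²) − 2β ∂x∂y. -/

import Mathlib

/-!
Write `T_{i,j} = H_i(x) H_j(y)` and `Ĥ_{n,m} = Σ_k c_k T_{n-k,m-k}`. By Hermite's equation
`x H_i' - H_i'' = i H_i`, each `T_{i,j}` is an eigenvector of `𝔇 + 2β ∂x∂y` with eigenvalue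
`i + j`, while `∂x∂y T_{i,j} = i j T_{i-1,j-1}` because `H_i' = i H_{i-1}`. Hence `𝔇` sends
`c_k T_{n-k,m-k}` to `(n + m - 2k) c_k T_{n-k,m-k} - 2β (n-k)(m-k) c_k T_{n-k-1,m-k-1}`.
The coefficients satisfy `(k+1) c_{k+1} = -β (n-k)(m-k) c_k`, so the defect from `(n + m) Ĥ_{n,m}`
is the telescoping sum `Σ_k (2(k+1) c_{k+1} T_{n-k-1,m-k-1} - 2k c_k T_{n-k,m-k})`, whose boundary
terms vanish: the one at `k = 0` carries the factor `0`, and `c_{min(n,m)+1} = 0`.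
-/

open MvPolynomial Finset

/-- The bivariate Hermite polynomial
`Ĥ_{n,m} = Σ_{k=0}^{min(n,m)} (−1)^k k! C(n,k) C(m,k) a^{(n−k)/2} b^k c^{(m−k)/2}
H_{n−k}(x) H_{m−k}(y)` in the variables `x = X 0`, `y = X 1`, where `H_j` is the
probabilist's Hermite polynomial and the powers of `a`, `c` are real powers. -/
noncomputable def bivariateHermite (a b c : ℝ) (n m : ℕ) : MvPolynomial (Fin 2) ℝ :=
  ∑ k ∈ range (min n m + 1),
    C ((-1 : ℝ) ^ k * (k.factorial : ℝ) * (n.choose k : ℝ) * (m.choose k : ℝ) *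
        a ^ (((n - k : ℕ) : ℝ) / 2) * b ^ k * c ^ (((m - k : ℕ) : ℝ) / 2)) *
      Polynomial.aeval (X 0) (Polynomial.hermite (n - k)) *
      Polynomial.aeval (X 1) (Polynomial.hermite (m - k))

open scoped Polynomial

namespace Polynomial

theorem derivative_hermite (n : ℕ) : derivative (hermite n) = (n : ℤ[X]) * hermite (n - 1) := by
  induction n with
  | zero => simp
  | succ n ih =>
    rw [hermite_succ, derivative_sub, derivative_mul, derivative_X, ih, add_tsub_cancel_right]
    rcases n with _ | n
    · simp
    · rw [derivative_mul, add_tsub_cancel_right, hermite_succ n]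
      simp only [derivative_natCast, zero_mul, zero_add]
      push_cast
      ring

theorem X_mul_derivative_hermite_sub (n : ℕ) :
    X * derivative (hermite n) - derivative (derivative (hermite n)) = (n : ℤ[X]) * hermite n := by
  rcases n with _ | n
  · simp
  · rw [derivative_hermite, derivative_mul, derivative_natCast, add_tsub_cancel_right,
      hermite_succ]
    ring

end Polynomial

namespace MvPolynomial

variable {R σ : Type*} [CommRing R]

theorem pderiv_aeval_X_self (i : σ) (p : ℤ[X]) :
    pderiv i (Polynomial.aeval (X i : MvPolynomial σ R) p) =
      Polynomial.aeval (X i) (Polynomial.derivative p) := by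
  have := ((pderiv i : Derivation R (MvPolynomial σ R) _).restrictScalars ℤ).map_aeval p (X i)
  rwa [Derivation.coe_restrictScalars, pderiv_X_self, smul_eq_mul, mul_one] at this

theorem pderiv_aeval_X_of_ne {i j : σ} (h : j ≠ i) (p : ℤ[X]) :
    pderiv i (Polynomial.aeval (X j : MvPolynomial σ R) p) = 0 := by
  have := ((pderiv i : Derivation R (MvPolynomial σ R) _).restrictScalars ℤ).map_aeval p (X j)
  rwa [Derivation.coe_restrictScalars, pderiv_X_of_ne h, smul_zero] at this

end MvPolynomial

noncomputable def bivariateHermiteOp (β : ℝ) :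
    MvPolynomial (Fin 2) ℝ →ₗ[ℝ] MvPolynomial (Fin 2) ℝ where
  toFun p := X 0 * pderiv 0 p - pderiv 0 (pderiv 0 p) + X 1 * pderiv 1 p -
    pderiv 1 (pderiv 1 p) - C (2 * β) * pderiv 0 (pderiv 1 p)
  map_add' p q := by simp only [map_add]; ring
  map_smul' r p := by
    simp only [Derivation.map_smul, RingHom.id_apply, smul_sub, smul_add, mul_smul_comm]

theorem bivariateHermiteOp_aeval_mul_aeval (β : ℝ) (p q : ℤ[X]) :
    bivariateHermiteOp β (Polynomial.aeval (X 0) p * Polynomial.aeval (X 1) q) =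
      Polynomial.aeval (X 0) (Polynomial.X * p.derivative - p.derivative.derivative) *
          Polynomial.aeval (X 1) q +
        Polynomial.aeval (X 0) p *
          Polynomial.aeval (X 1) (Polynomial.X * q.derivative - q.derivative.derivative) -
        C (2 * β) *
          (Polynomial.aeval (X 0) p.derivative * Polynomial.aeval (X 1) q.derivative) := by
  have h01 : (1 : Fin 2) ≠ 0 := by decide
  simp only [bivariateHermiteOp, LinearMap.coe_mk, AddHom.coe_mk, Derivation.leibniz,
    pderiv_aeval_X_self, pderiv_aeval_X_of_ne h01, pderiv_aeval_X_of_ne h01.symm, smul_eq_mul,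
    map_sub, map_mul, Polynomial.aeval_X, mul_zero, zero_add, add_zero]
  ring

noncomputable def hermiteProd (i j : ℕ) : MvPolynomial (Fin 2) ℝ :=
  Polynomial.aeval (X 0) (Polynomial.hermite i) * Polynomial.aeval (X 1) (Polynomial.hermite j)

theorem bivariateHermiteOp_hermiteProd (β : ℝ) (i j : ℕ) :
    bivariateHermiteOp β (hermiteProd i j) =
      ((i + j : ℕ) : ℝ) • hermiteProd i j - (2 * β * i * j) • hermiteProd (i - 1) (j - 1) := by
  rw [hermiteProd, bivariateHermiteOp_aeval_mul_aeval, Polynomial.X_mul_derivative_hermite_sub,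
    Polynomial.X_mul_derivative_hermite_sub, Polynomial.derivative_hermite,
    Polynomial.derivative_hermite]
  simp only [hermiteProd, smul_eq_C_mul, map_mul, map_natCast, Nat.cast_add, map_add]
  ring

noncomputable def bivariateHermiteCoeff (a b c : ℝ) (n m k : ℕ) : ℝ :=
  (-1 : ℝ) ^ k * (k.factorial : ℝ) * (n.choose k : ℝ) * (m.choose k : ℝ) *
    a ^ (((n - k : ℕ) : ℝ) / 2) * b ^ k * c ^ (((m - k : ℕ) : ℝ) / 2)

theorem bivariateHermite_eq_sum (a b c : ℝ) (n m : ℕ) :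
    bivariateHermite a b c n m = ∑ k ∈ range (min n m + 1),
      bivariateHermiteCoeff a b c n m k • hermiteProd (n - k) (m - k) := by
  simp only [bivariateHermite, bivariateHermiteCoeff, hermiteProd, smul_eq_C_mul, mul_assoc]

theorem bivariateHermiteCoeff_eq_zero {a b c : ℝ} {n m k : ℕ} (h : min n m < k) :
    bivariateHermiteCoeff a b c n m k = 0 := by
  rcases min_lt_iff.mp h with h | h <;> simp [bivariateHermiteCoeff, Nat.choose_eq_zero_of_lt h]

theorem bivariateHermiteCoeff_eq_sqrt {a c : ℝ} (ha : 0 ≤ a) (hc : 0 ≤ c) (b : ℝ) (n m k : ℕ) :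
    bivariateHermiteCoeff a b c n m k = (-1) ^ k * (k.factorial : ℝ) * (n.choose k : ℝ) *
      (m.choose k : ℝ) * √a ^ (n - k) * b ^ k * √c ^ (m - k) := by
  simp only [bivariateHermiteCoeff, Real.rpow_div_two_eq_sqrt _ ha, Real.rpow_div_two_eq_sqrt _ hc,
    Real.rpow_natCast]

theorem succ_mul_bivariateHermiteCoeff_succ {a c : ℝ} (ha : 0 < a) (hc : 0 < c) (b : ℝ)
    (n m k : ℕ) :
    (k + 1) * bivariateHermiteCoeff a b c n m (k + 1) =
      -(b / √(a * c)) * (n - k : ℕ) * (m - k : ℕ) * bivariateHermiteCoeff a b c n m k := by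
  rcases lt_or_ge k (min n m) with hk | hk
  · simp only [bivariateHermiteCoeff_eq_sqrt ha.le hc.le]
    obtain ⟨hkn, hkm⟩ := lt_min_iff.mp hk
    have hn : n - k = n - (k + 1) + 1 := by omega
    have hm : m - k = m - (k + 1) + 1 := by omega
    have hcn := congrArg (Nat.cast : ℕ → ℝ) (Nat.choose_succ_right_eq n k)
    have hcm := congrArg (Nat.cast : ℕ → ℝ) (Nat.choose_succ_right_eq m k)
    have hsa := Real.sqrt_pos.2 ha
    have hsc := Real.sqrt_pos.2 hc
    rw [hn] at hcn
    rw [hm] at hcm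
    rw [hn, hm, Real.sqrt_mul ha.le, Nat.factorial_succ]
    push_cast at hcn hcm ⊢
    field_simp
    linear_combination
      (-1) ^ (k + 1) * (√a ^ (n - (k + 1) + 1) * b ^ (k + 1) * √c ^ (m - (k + 1) + 1)) *
        ((m.choose (k + 1) * (k + 1)) * hcn + (n.choose k * ((n - (k + 1) : ℕ) + 1)) * hcm)
  · rw [bivariateHermiteCoeff_eq_zero (Nat.lt_succ_of_le hk)]
    rcases min_le_iff.mp hk with h | h <;> simp [Nat.sub_eq_zero_of_le h]

theorem bivariateHermiteOp_coeff_smul_hermiteProd {a c : ℝ} (ha : 0 < a) (hc : 0 < c) (b : ℝ)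
    {n m k : ℕ} (hkn : k ≤ n) (hkm : k ≤ m) :
    bivariateHermiteOp (b / √(a * c))
        (bivariateHermiteCoeff a b c n m k • hermiteProd (n - k) (m - k)) =
      ((m + n : ℕ) : ℝ) • bivariateHermiteCoeff a b c n m k • hermiteProd (n - k) (m - k) +
        ((2 * ((k + 1 : ℕ) : ℝ) * bivariateHermiteCoeff a b c n m (k + 1)) •
            hermiteProd (n - (k + 1)) (m - (k + 1)) -
          (2 * k * bivariateHermiteCoeff a b c n m k) • hermiteProd (n - k) (m - k)) := by
  have hrec := succ_mul_bivariateHermiteCoeff_succ ha hc b n m k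
  simp only [map_smul, bivariateHermiteOp_hermiteProd, Nat.sub_sub]
  rw [show (2 : ℝ) * ((k + 1 : ℕ) : ℝ) * bivariateHermiteCoeff a b c n m (k + 1) =
    2 * ((k + 1) * bivariateHermiteCoeff a b c n m (k + 1)) by push_cast; ring, hrec]
  push_cast [Nat.cast_sub hkn, Nat.cast_sub hkm]
  module

/-- The bivariate Hermite polynomials satisfy the PDE `𝔇 Ĥ_{n,m} = (m+n)·Ĥ_{n,m}` for
`𝔇 = (x∂x − ∂x²) + (y∂y − ∂y²) − 2β ∂x∂y`, where `β = b/√(ac)`. -/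
theorem bivariateHermite_pde (a b c β : ℝ) (ha : 0 < a) (hc : 0 < c)
    (hβ : β = b / Real.sqrt (a * c)) (n m : ℕ) :
    X 0 * pderiv 0 (bivariateHermite a b c n m) -
        pderiv 0 (pderiv 0 (bivariateHermite a b c n m)) +
        X 1 * pderiv 1 (bivariateHermite a b c n m) -
        pderiv 1 (pderiv 1 (bivariateHermite a b c n m)) -
        C (2 * β) * pderiv 0 (pderiv 1 (bivariateHermite a b c n m)) =
      C ((m + n : ℕ) : ℝ) * bivariateHermite a b c n m := by
  subst hβ
  set f : ℕ → MvPolynomial (Fin 2) ℝ := fun j =>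
    (2 * j * bivariateHermiteCoeff a b c n m j) • hermiteProd (n - j) (m - j)
  change bivariateHermiteOp _ _ = _
  calc _ = ∑ k ∈ range (min n m + 1), (((m + n : ℕ) : ℝ) •
        bivariateHermiteCoeff a b c n m k • hermiteProd (n - k) (m - k) + (f (k + 1) - f k)) := by
        rw [bivariateHermite_eq_sum, map_sum]
        refine sum_congr rfl fun k hk => ?_
        have hk := le_min_iff.mp (mem_range_succ_iff.mp hk)
        exact bivariateHermiteOp_coeff_smul_hermiteProd ha hc b hk.1 hk.2
    _ = ((m + n : ℕ) : ℝ) • bivariateHermite a b c n m + (f (min n m + 1) - f 0) := by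
        rw [sum_add_distrib, ← smul_sum, sum_range_sub, bivariateHermite_eq_sum]
    _ = _ := by
        simp [f, bivariateHermiteCoeff_eq_zero (Nat.lt_succ_self _), smul_eq_C_mul]
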